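/- Suppose g : ℝ≥0 → [0,1] is non-increasing, 0 < C = ∫_{ℝ²}g(‖x‖)dx < ∞, and lim_{x→∞} g(x) x² log²x exists and equals L ∈ [0, ∞]. With r_ρ = sqrt((log ρ + b)/(Cρ)), we have lim_{ρ→∞} (log ρ + b)/C · ∫_{ℝ² \ D(0, (1/2) r_ρ^{-1})} g(‖x‖)dx = 4πL/C, and hence lim_{ρ→∞} ρ · exp(-(log ρ + b)/C ∫_{D(0,(1/2)r_ρ^{-1})} g(‖x‖)dx) = e^{-b + 4πL/C}. -/

import Mathlib

/-!
In polar coordinates the integral of `g ‖x‖` outside the disc of radius `R` is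
`2π ∫_R^∞ y g(y) dy`. Comparing `y g(y)` with `c / (y log² y)`, whose tail integral is
`c / log R`, shows that `log R · ∫_R^∞ y g(y) dy → L`. The radius `R_ρ = (1/2) r_ρ⁻¹`
satisfies `log R_ρ ~ (log ρ + b) / 2`, which gives the first limit `2 · 2πL / C`. For the
second, the disc integral is `C` minus the tail integral, and
`ρ · exp (-(log ρ + b)) = exp (-b)`.
-/

open MeasureTheory Filter Real

open Set Metric Topology
open scoped ENNReal

theorem setIntegral_compl_closedBall_fun_norm_addHaar {E F : Type*} [NormedAddCommGroup E]
    [NormedSpace ℝ E] [Nontrivial E] [FiniteDimensional ℝ E] [MeasurableSpace E] [BorelSpace E]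
    [NormedAddCommGroup F] [NormedSpace ℝ F] (μ : Measure E) [μ.IsAddHaarMeasure]
    (f : ℝ → F) {R : ℝ} (hR : 0 ≤ R) :
    ∫ x in (closedBall (0 : E) R)ᶜ, f ‖x‖ ∂μ =
      Module.finrank ℝ E • μ.real (ball 0 1) •
        ∫ y in Ioi R, y ^ (Module.finrank ℝ E - 1) • f y := by
  have h := integral_fun_norm_addHaar μ ((Ioi R).indicator f)
  have hlhs : (fun x : E => (Ioi R).indicator f ‖x‖) =
      (closedBall (0 : E) R)ᶜ.indicator (f ‖·‖) := by
    ext x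
    simp [indicator, mem_closedBall, dist_zero_right]
  have hrhs : (fun y : ℝ => y ^ (Module.finrank ℝ E - 1) • (Ioi R).indicator f y)
      = (Ioi R).indicator (fun y => y ^ (Module.finrank ℝ E - 1) • f y) := by
    ext y
    by_cases hy : y ∈ Ioi R <;> simp [hy]
  rwa [hlhs, integral_indicator measurableSet_closedBall.compl, hrhs,
    setIntegral_indicator measurableSet_Ioi, Ioi_inter_Ioi, max_eq_right hR] at h

theorem EuclideanSpace.setIntegral_compl_closedBall_fin_two (g : ℝ → ℝ) {R : ℝ}
    (hR : 0 ≤ R) :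
    ∫ x in (closedBall (0 : EuclideanSpace ℝ (Fin 2)) R)ᶜ, g ‖x‖ =
      2 * π * ∫ y in Ioi R, y * g y := by
  rw [setIntegral_compl_closedBall_fun_norm_addHaar volume g hR, measureReal_def,
    EuclideanSpace.volume_ball_fin_two, finrank_euclideanSpace_fin]
  simp only [ENNReal.ofReal_one, one_pow, one_mul, ENNReal.toReal_ofReal pi_pos.le,
    Nat.add_one_sub_one, pow_one, smul_eq_mul, nsmul_eq_mul, Nat.cast_ofNat]
  ring

theorem EuclideanSpace.integrableOn_Ioi_mul_of_integrable_fun_norm_fin_two {g : ℝ → ℝ}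
    (hg : Integrable (fun x : EuclideanSpace ℝ (Fin 2) => g ‖x‖)) :
    IntegrableOn (fun y => y * g y) (Ioi 0) := by
  simpa [finrank_euclideanSpace_fin] using (integrable_fun_norm_addHaar volume).1 hg

theorem hasDerivAt_neg_inv_log {r : ℝ} (hr : 1 < r) :
    HasDerivAt (fun t => -(log t)⁻¹) (r * log r ^ 2)⁻¹ r := by
  have hlog : log r ≠ 0 := (log_pos hr).ne'
  exact ((hasDerivAt_log (by linarith)).inv hlog).neg.congr_deriv (by field_simp)

theorem tendsto_neg_inv_log_atTop : Tendsto (fun t => -(log t)⁻¹) atTop (𝓝 0) := by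
  simpa using tendsto_log_atTop.inv_tendsto_atTop.neg

theorem integrableOn_Ioi_inv_mul_log_sq {a : ℝ} (ha : 1 < a) :
    IntegrableOn (fun r => (r * log r ^ 2)⁻¹) (Ioi a) :=
  integrableOn_Ioi_deriv_of_nonneg' (fun x hx => hasDerivAt_neg_inv_log (ha.trans_le hx))
    (fun x hx => by have := ha.trans hx; positivity) tendsto_neg_inv_log_atTop

theorem integral_Ioi_inv_mul_log_sq {a : ℝ} (ha : 1 < a) :
    ∫ r in Ioi a, (r * log r ^ 2)⁻¹ = (log a)⁻¹ := by
  rw [integral_Ioi_of_hasDerivAt_of_nonneg'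
    (fun x hx => hasDerivAt_neg_inv_log (ha.trans_le hx))
    (fun x hx => by have := ha.trans hx; positivity)
    tendsto_neg_inv_log_atTop]
  ring

theorem log_mul_setIntegral_Ioi_le {f : ℝ → ℝ} {R c : ℝ} (hR : 1 < R)
    (hf : IntegrableOn f (Ioi R)) (hfc : ∀ y > R, f y * y * log y ^ 2 ≤ c) :
    log R * ∫ y in Ioi R, f y ≤ c := by
  have hlogR : 0 < log R := log_pos hR
  have hpointwise : ∀ y ∈ Ioi R, f y ≤ c * (y * log y ^ 2)⁻¹ := by
    intro y hy
    have hy1 : 1 < y := hR.trans hy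
    have : 0 < y * log y ^ 2 := by have := log_pos hy1; positivity
    rw [← div_eq_mul_inv, le_div_iff₀ this, ← mul_assoc]
    exact hfc y hy
  calc log R * ∫ y in Ioi R, f y
      ≤ log R * ∫ y in Ioi R, c * (y * log y ^ 2)⁻¹ :=
        mul_le_mul_of_nonneg_left (setIntegral_mono_on hf
          ((integrableOn_Ioi_inv_mul_log_sq hR).const_mul c) measurableSet_Ioi hpointwise)
          hlogR.le
    _ = c := by
        rw [integral_const_mul, integral_Ioi_inv_mul_log_sq hR]
        field_simp

theorem eventually_log_mul_setIntegral_Ioi_le {f : ℝ → ℝ} {a c : ℝ}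
    (hf : IntegrableOn f (Ioi a)) (hfc : ∀ᶠ y in atTop, f y * y * log y ^ 2 ≤ c) :
    ∀ᶠ R in atTop, log R * ∫ y in Ioi R, f y ≤ c := by
  obtain ⟨R₀, hR₀⟩ := eventually_atTop.1 hfc
  filter_upwards [eventually_gt_atTop (max 1 (max a R₀))] with R hR
  simp only [max_lt_iff] at hR
  exact log_mul_setIntegral_Ioi_le hR.1 (hf.mono_set (Ioi_subset_Ioi hR.2.1.le))
    fun y hy => hR₀ y (hR.2.2.trans hy).le

theorem eventually_le_log_mul_setIntegral_Ioi {f : ℝ → ℝ} {a c : ℝ}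
    (hf : IntegrableOn f (Ioi a)) (hfc : ∀ᶠ y in atTop, c ≤ f y * y * log y ^ 2) :
    ∀ᶠ R in atTop, c ≤ log R * ∫ y in Ioi R, f y := by
  have hneg := eventually_log_mul_setIntegral_Ioi_le (f := fun y => -f y) hf.neg
    (hfc.mono fun y hy => by linarith : ∀ᶠ y in atTop, -f y * y * log y ^ 2 ≤ -c)
  filter_upwards [hneg] with R hR
  rw [integral_neg] at hR
  linarith

theorem tendsto_log_mul_setIntegral_Ioi {f : ℝ → ℝ} {a : ℝ} {L : ℝ≥0∞}
    (hf : IntegrableOn f (Ioi a))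
    (hlim : Tendsto (fun x => ENNReal.ofReal (f x * x * log x ^ 2)) atTop (𝓝 L)) :
    Tendsto (fun R => ENNReal.ofReal (log R * ∫ y in Ioi R, f y)) atTop (𝓝 L) := by
  -- `tendsto_order` treats `L = ∞` like any other limit.
  rw [tendsto_order] at hlim ⊢
  constructor
  · intro c hcL
    obtain ⟨c', hcc', hc'L⟩ := exists_between hcL
    have hc' : c' ≠ ⊤ := ne_top_of_lt hc'L
    have hlower := eventually_le_log_mul_setIntegral_Ioi hf ((hlim.1 c' hc'L).mono
      fun y hy => ((ENNReal.lt_ofReal_iff_toReal_lt hc').1 hy).le)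
    filter_upwards [hlower] with R hR
    rw [← ENNReal.ofReal_toReal hc'] at hcc'
    exact hcc'.trans_le (ENNReal.ofReal_le_ofReal hR)
  · intro c hLc
    obtain ⟨c', hLc', hc'c⟩ := exists_between hLc
    have hc' : c' ≠ ⊤ := ne_top_of_lt hc'c
    have hupper := eventually_log_mul_setIntegral_Ioi_le hf ((hlim.2 c' hLc').mono
      fun y hy => (ENNReal.ofReal_le_iff_le_toReal hc').1 hy.le)
    filter_upwards [hupper] with R hR
    exact ((ENNReal.ofReal_le_iff_le_toReal hc').2 hR).trans_lt hc'c

/-- The radius `(1/2) r_ρ⁻¹` of the paper, where `r_ρ = √((log ρ + b)/(Cρ))`. -/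
noncomputable def cutoffRadius (C b ρ : ℝ) : ℝ :=
  1 / 2 * (Real.sqrt ((log ρ + b) / (C * ρ)))⁻¹

theorem log_cutoffRadius {C b ρ : ℝ} (hC : 0 < C) (hρ : 0 < ρ) (hu : 0 < log ρ + b) :
    log (cutoffRadius C b ρ) = (log ρ + b - log (log ρ + b) + log C - b) / 2 - log 2 := by
  have hq : 0 < C * ρ / (log ρ + b) := by positivity
  rw [cutoffRadius, ← Real.sqrt_inv, inv_div, log_mul (by norm_num) (Real.sqrt_pos.2 hq).ne',
    log_sqrt hq.le, log_div (by positivity) hu.ne', log_mul hC.ne' hρ.ne', one_div, log_inv]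
  ring

theorem tendsto_log_cutoffRadius_div {C : ℝ} (hC : 0 < C) (b : ℝ) :
    Tendsto (fun ρ => log (cutoffRadius C b ρ) / (log ρ + b)) atTop (𝓝 (1 / 2)) := by
  have hu : Tendsto (fun ρ => log ρ + b) atTop atTop :=
    tendsto_atTop_add_const_right _ b tendsto_log_atTop
  have hk : Tendsto (fun u => 1 / 2 - log u / u / 2 + (log C - b - 2 * log 2) / 2 / u)
      atTop (𝓝 (1 / 2)) := by
    simpa using (tendsto_const_nhds.sub
      (isLittleO_log_id_atTop.tendsto_div_nhds_zero.div_const 2)).add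
      (tendsto_const_nhds.div_atTop tendsto_id)
  refine (hk.comp hu).congr' ?_
  filter_upwards [eventually_gt_atTop 0, hu.eventually_gt_atTop 0] with ρ hρ hpos
  rw [Function.comp_apply, log_cutoffRadius hC hρ hpos]
  field_simp
  ring

theorem tendsto_cutoffRadius_atTop {C : ℝ} (hC : 0 < C) (b : ℝ) :
    Tendsto (cutoffRadius C b) atTop atTop := by
  have hu : Tendsto (fun ρ => log ρ + b) atTop atTop :=
    tendsto_atTop_add_const_right _ b tendsto_log_atTop
  have hlog : Tendsto (fun ρ => log (cutoffRadius C b ρ)) atTop atTop :=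
    (hu.atTop_mul_pos (by norm_num) (tendsto_log_cutoffRadius_div hC b)).congr' <|
      (hu.eventually_gt_atTop 0).mono fun ρ hρ => mul_div_cancel₀ _ hρ.ne'
  refine (tendsto_exp_atTop.comp hlog).congr' ?_
  filter_upwards [eventually_gt_atTop 0, hu.eventually_gt_atTop 0] with ρ hρ hpos
  have : 0 < (log ρ + b) / (C * ρ) := by positivity
  exact exp_log (by unfold cutoffRadius; have := Real.sqrt_pos.2 this; positivity)

theorem tendsto_log_mul_setIntegral_compl_closedBall_cutoffRadius {g : ℝ → ℝ} {C : ℝ}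
    {L : ℝ≥0∞} (b : ℝ) (hC : 0 < C)
    (htail : Tendsto (fun R => ENNReal.ofReal (log R * ∫ y in Ioi R, y * g y)) atTop (𝓝 L)) :
    Tendsto (fun ρ => ENNReal.ofReal ((log ρ + b) / C *
        ∫ x in (closedBall (0 : EuclideanSpace ℝ (Fin 2)) (cutoffRadius C b ρ))ᶜ, g ‖x‖))
      atTop (𝓝 (ENNReal.ofReal (4 * π / C) * L)) := by
  have hW := tendsto_cutoffRadius_atTop hC b
  have hratio : Tendsto (fun ρ => (log ρ + b) / log (cutoffRadius C b ρ)) atTop (𝓝 2) := by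
    convert (tendsto_log_cutoffRadius_div hC b).inv₀ (by norm_num) using 1
    · simp only [inv_div]
    · norm_num
  have hfactor : Tendsto (fun ρ => ENNReal.ofReal ((log ρ + b) / log (cutoffRadius C b ρ) *
      (2 * π / C))) atTop (𝓝 (ENNReal.ofReal (4 * π / C))) := by
    rw [show 4 * π / C = 2 * (2 * π / C) by ring]
    exact ENNReal.tendsto_ofReal (hratio.mul_const _)
  refine (ENNReal.Tendsto.mul hfactor (Or.inl (ENNReal.ofReal_pos.2 (by positivity)).ne')
    (htail.comp hW) (Or.inr ENNReal.ofReal_ne_top)).congr' ?_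
  have hu : Tendsto (fun ρ => log ρ + b) atTop atTop :=
    tendsto_atTop_add_const_right _ b tendsto_log_atTop
  filter_upwards [hW.eventually_gt_atTop 1, hu.eventually_ge_atTop 0] with ρ hW1 hu0
  have hlogW : 0 < log (cutoffRadius C b ρ) := log_pos hW1
  rw [Function.comp_apply, ← ENNReal.ofReal_mul (by positivity),
    EuclideanSpace.setIntegral_compl_closedBall_fin_two g (by linarith)]
  congr 1
  field_simp

theorem tendsto_ofReal_exp {α : Type*} {l : Filter α} {A : α → ℝ} {K : ℝ≥0∞}
    (hA : ∀ᶠ x in l, 0 ≤ A x) (h : Tendsto (fun x => ENNReal.ofReal (A x)) l (𝓝 K)) :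
    Tendsto (fun x => ENNReal.ofReal (exp (A x))) l
      (𝓝 (if K = ⊤ then ⊤ else ENNReal.ofReal (exp K.toReal))) := by
  split_ifs with hK
  · subst hK
    rw [ENNReal.tendsto_ofReal_nhds_top] at h ⊢
    exact tendsto_exp_atTop.comp h
  · have hAK : Tendsto A l (𝓝 K.toReal) :=
      ((ENNReal.tendsto_toReal hK).comp h).congr' (hA.mono fun x hx => ENNReal.toReal_ofReal hx)
    exact ENNReal.tendsto_ofReal ((continuous_exp.tendsto _).comp hAK)

theorem mul_exp_neg_div_mul_eq {ρ b C B T : ℝ} (hρ : 0 < ρ) (hC : C ≠ 0) (hBT : B + T = C) :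
    ρ * exp (-((log ρ + b) / C * B)) = exp (-b) * exp ((log ρ + b) / C * T) := by
  have hexponent : -((log ρ + b) / C * B) = -log ρ + (-b + (log ρ + b) / C * T) := by
    obtain rfl : B = C - T := by linarith
    field_simp
    ring
  rw [hexponent, exp_add, exp_neg (log ρ), exp_log hρ, exp_add]
  field_simp

theorem tendsto_mul_exp_neg_setIntegral_closedBall_cutoffRadius {g : ℝ → ℝ} {C : ℝ}
    {K : ℝ≥0∞} (b : ℝ) (hg : ∀ x, 0 ≤ x → 0 ≤ g x)
    (hint : Integrable (fun x : EuclideanSpace ℝ (Fin 2) => g ‖x‖))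
    (hC : C = ∫ x : EuclideanSpace ℝ (Fin 2), g ‖x‖) (hCpos : 0 < C)
    (htail : Tendsto (fun ρ => ENNReal.ofReal ((log ρ + b) / C *
        ∫ x in (closedBall (0 : EuclideanSpace ℝ (Fin 2)) (cutoffRadius C b ρ))ᶜ, g ‖x‖))
      atTop (𝓝 K)) :
    Tendsto (fun ρ => ENNReal.ofReal (ρ * exp (-((log ρ + b) / C *
        ∫ x in closedBall (0 : EuclideanSpace ℝ (Fin 2)) (cutoffRadius C b ρ), g ‖x‖))))
      atTop (𝓝 (ENNReal.ofReal (exp (-b)) *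
        if K = ⊤ then ⊤ else ENNReal.ofReal (exp K.toReal))) := by
  have hnonneg : ∀ᶠ ρ in atTop, 0 ≤ (log ρ + b) / C *
      ∫ x in (closedBall (0 : EuclideanSpace ℝ (Fin 2)) (cutoffRadius C b ρ))ᶜ, g ‖x‖ := by
    filter_upwards [(tendsto_atTop_add_const_right _ b tendsto_log_atTop).eventually_ge_atTop 0]
      with ρ hu
    exact mul_nonneg (div_nonneg hu hCpos.le)
      (setIntegral_nonneg measurableSet_closedBall.compl fun x _ => hg _ (norm_nonneg x))
  refine (ENNReal.Tendsto.const_mul (tendsto_ofReal_exp hnonneg htail)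
    (Or.inr ENNReal.ofReal_ne_top)).congr' ?_
  filter_upwards [eventually_gt_atTop 0] with ρ hρ
  rw [← ENNReal.ofReal_mul (exp_pos _).le, mul_exp_neg_div_mul_eq hρ hCpos.ne'
    ((integral_add_compl measurableSet_closedBall hint).trans hC.symm)]

theorem stmt_10_general (g : ℝ → ℝ) (C b : ℝ) (L : ENNReal)
    (hg01 : ∀ x, 0 ≤ x → 0 ≤ g x ∧ g x ≤ 1)
    (hint : Integrable (fun x : EuclideanSpace ℝ (Fin 2) => g ‖x‖))
    (hC : C = ∫ x : EuclideanSpace ℝ (Fin 2), g ‖x‖) (hCpos : 0 < C)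
    (hlim : Tendsto (fun x : ℝ => ENNReal.ofReal (g x * x ^ 2 * (Real.log x) ^ 2))
      atTop (nhds L)) :
    Tendsto
        (fun ρ : ℝ =>
          ENNReal.ofReal
            ((Real.log ρ + b) / C *
              ∫ x in (Metric.closedBall (0 : EuclideanSpace ℝ (Fin 2))
                  ((1 / 2) * (Real.sqrt ((Real.log ρ + b) / (C * ρ)))⁻¹))ᶜ,
                g ‖x‖))
        atTop (nhds (ENNReal.ofReal (4 * π / C) * L)) ∧
      Tendsto
        (fun ρ : ℝ =>
          ENNReal.ofReal
            (ρ *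
              Real.exp
                (-((Real.log ρ + b) / C *
                    ∫ x in Metric.closedBall (0 : EuclideanSpace ℝ (Fin 2))
                        ((1 / 2) * (Real.sqrt ((Real.log ρ + b) / (C * ρ)))⁻¹),
                      g ‖x‖))))
        atTop
        (nhds
          (ENNReal.ofReal (Real.exp (-b)) *
            (if L = ⊤ then ⊤ else ENNReal.ofReal (Real.exp (4 * π * L.toReal / C))))) := by
  have htail : Tendsto (fun R => ENNReal.ofReal (log R * ∫ y in Ioi R, y * g y)) atTop (𝓝 L) :=
    tendsto_log_mul_setIntegral_Ioi
      (EuclideanSpace.integrableOn_Ioi_mul_of_integrable_fun_norm_fin_two hint)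
      (hlim.congr fun x => congrArg ENNReal.ofReal (by ring))
  have hfirst := tendsto_log_mul_setIntegral_compl_closedBall_cutoffRadius b hCpos htail
  refine ⟨hfirst, ?_⟩
  have hlimit : (if L = ⊤ then ⊤ else ENNReal.ofReal (exp (4 * π * L.toReal / C))) =
      if ENNReal.ofReal (4 * π / C) * L = ⊤ then ⊤
      else ENNReal.ofReal (exp (ENNReal.ofReal (4 * π / C) * L).toReal) := by
    by_cases hL : L = ⊤
    · subst hL
      rw [ENNReal.mul_top (ENNReal.ofReal_pos.2 (by positivity)).ne', if_pos rfl, if_pos rfl]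
    · rw [if_neg (ENNReal.mul_ne_top ENNReal.ofReal_ne_top hL), if_neg hL, ENNReal.toReal_mul,
        ENNReal.toReal_ofReal (by positivity), div_mul_eq_mul_div]
  rw [hlimit]
  exact tendsto_mul_exp_neg_setIntegral_closedBall_cutoffRadius b
    (fun x hx => (hg01 x hx).1) hint hC hCpos hfirst

/-- Suppose `g : ℝ≥0 → [0,1]` is non-increasing, `0 < C = ∫_{ℝ²} g(‖x‖)dx < ∞`,
and `lim_{x→∞} g(x) x² log²x = L ∈ [0,∞]` (the limit being taken in `ℝ≥0∞` so
that `L = ∞` is allowed).  With `r_ρ = sqrt((log ρ + b)/(Cρ))`,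
`lim_{ρ→∞} (log ρ + b)/C · ∫_{ℝ² \ D(0,(1/2) r_ρ^{-1})} g(‖x‖) dx = 4πL/C`,
and hence
`lim_{ρ→∞} ρ · exp(-(log ρ + b)/C ∫_{D(0,(1/2) r_ρ^{-1})} g(‖x‖) dx)
  = e^{-b + 4πL/C}` (an infinite limit when `L = ∞`). -/
theorem stmt_10 (g : ℝ → ℝ) (C b : ℝ) (L : ENNReal)
    (hg01 : ∀ x, 0 ≤ x → 0 ≤ g x ∧ g x ≤ 1)
    (hmono : AntitoneOn g (Set.Ici 0))
    (hint : Integrable (fun x : EuclideanSpace ℝ (Fin 2) => g ‖x‖))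
    (hC : C = ∫ x : EuclideanSpace ℝ (Fin 2), g ‖x‖) (hCpos : 0 < C)
    (hlim : Tendsto (fun x : ℝ => ENNReal.ofReal (g x * x ^ 2 * (Real.log x) ^ 2))
      atTop (nhds L)) :
    Tendsto
        (fun ρ : ℝ =>
          ENNReal.ofReal
            ((Real.log ρ + b) / C *
              ∫ x in (Metric.closedBall (0 : EuclideanSpace ℝ (Fin 2))
                  ((1 / 2) * (Real.sqrt ((Real.log ρ + b) / (C * ρ)))⁻¹))ᶜ,
                g ‖x‖))
        atTop (nhds (ENNReal.ofReal (4 * π / C) * L)) ∧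
      Tendsto
        (fun ρ : ℝ =>
          ENNReal.ofReal
            (ρ *
              Real.exp
                (-((Real.log ρ + b) / C *
                    ∫ x in Metric.closedBall (0 : EuclideanSpace ℝ (Fin 2))
                        ((1 / 2) * (Real.sqrt ((Real.log ρ + b) / (C * ρ)))⁻¹),
                      g ‖x‖))))
        atTop
        (nhds
          (ENNReal.ofReal (Real.exp (-b)) *
            (if L = ⊤ then ⊤ else ENNReal.ofReal (Real.exp (4 * π * L.toReal / C))))) :=
  stmt_10_general g C b L hg01 hint hC hCpos hlim
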